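/- Let ν be a measure on L, γ : L → ℝ₊ measurable with ∫(γ²∧1)dν < ∞, h a bounded Lipschitz truncation function with constant Lip(h), and k₁, k₂ : L → ℝ^d measurable with ‖kᵢ(z)‖ ≤ γ(z) and ‖k₁(z) − k₂(z)‖ ≤ γ(z)·δ for all z ∈ L. Then for every κ ∈ (0,1): ∫_{γ ≤ 1} ‖(k₁(z) − h(k₁(z))) − (k₂(z) − h(k₂(z)))‖ dν(z) ≤ C ∫_{γ ≤ κ} γ(z)² dν(z) + (1 + Lip(h)) δ κ^{-1} ∫ (γ(z)² ∧ 1) dν(z), where C depends only on h. -/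
import Mathlib


open MeasureTheory
open scoped ENNReal

/-- equi-continuity estimate for the modified drift:
for every `κ ∈ (0,1)`,
`∫_{γ≤1} ‖(k₁ − h∘k₁) − (k₂ − h∘k₂)‖ dν ≤ C ∫_{γ≤κ} γ² dν + (1+Lip(h)) δ κ⁻¹ ∫ (γ²∧1) dν`,
where `C` depends only on `h`. -/
theorem stmt3 (d : ℕ) {L : Type*} [MeasurableSpace L] (ν : Measure L)
    (γ : L → ℝ) (hγpos : ∀ z, 0 ≤ γ z) (hγmeas : Measurable γ)
    (hγint : ∫⁻ z, ENNReal.ofReal (min (γ z ^ 2) 1) ∂ν < ∞)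
    (h : EuclideanSpace ℝ (Fin d) → EuclideanSpace ℝ (Fin d))
    (M : ℝ) (hbdd : ∀ y, ‖h y‖ ≤ M)
    (Lh : ℝ) (hLh : 0 ≤ Lh) (hLip : ∀ y y', ‖h y - h y'‖ ≤ Lh * ‖y - y'‖)
    (ε : ℝ) (hε : 0 < ε) (htrunc : ∀ y, ‖y‖ ≤ ε → h y = y)
    (k₁ k₂ : L → EuclideanSpace ℝ (Fin d)) (hk₁ : Measurable k₁) (hk₂ : Measurable k₂)
    (hk₁γ : ∀ z, ‖k₁ z‖ ≤ γ z) (hk₂γ : ∀ z, ‖k₂ z‖ ≤ γ z)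
    (δ : ℝ) (hδ : 0 ≤ δ) (hdiff : ∀ z, ‖k₁ z - k₂ z‖ ≤ γ z * δ) :
    ∃ C > (0 : ℝ), ∀ κ : ℝ, 0 < κ → κ < 1 →
      ∫⁻ z in {z | γ z ≤ 1},
          ENNReal.ofReal ‖(k₁ z - h (k₁ z)) - (k₂ z - h (k₂ z))‖ ∂ν
        ≤ ENNReal.ofReal C * (∫⁻ z in {z | γ z ≤ κ}, ENNReal.ofReal (γ z ^ 2) ∂ν)
          + ENNReal.ofReal ((1 + Lh) * δ * κ⁻¹)
              * ∫⁻ z, ENNReal.ofReal (min (γ z ^ 2) 1) ∂ν := by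
  have hM : 0 ≤ M := le_trans (norm_nonneg _) (hbdd 0)
  refine ⟨2 * (1 + M) / ε ^ 2, by positivity, fun κ hκ hκ1 => ?_⟩
  set C : ℝ := 2 * (1 + M) / ε ^ 2 with hC
  have hCpos : 0 < C := by positivity
  -- pointwise quadratic bound
  have key1 : ∀ y : EuclideanSpace ℝ (Fin d), ‖y‖ ≤ 1 →
      ‖y - h y‖ ≤ (1 + M) / ε ^ 2 * ‖y‖ ^ 2 := by
    intro y hy
    by_cases hyε : ‖y‖ ≤ ε
    · rw [htrunc y hyε]; simp; positivity
    · push_neg at hyε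
      have h1 : ‖y - h y‖ ≤ 1 + M :=
        le_trans (norm_sub_le _ _) (add_le_add hy (hbdd y))
      have hε2 : (0:ℝ) < ε ^ 2 := by positivity
      have h2 : ε ^ 2 ≤ ‖y‖ ^ 2 := by nlinarith [norm_nonneg y]
      calc ‖y - h y‖ ≤ 1 + M := h1
        _ ≤ (1 + M) / ε ^ 2 * ‖y‖ ^ 2 := by
            rw [div_mul_eq_mul_div, le_div_iff₀ hε2]; nlinarith
  set A : Set L := {z | γ z ≤ κ} with hA
  set B : Set L := {z | γ z ≤ 1} ∩ {z | κ < γ z} with hB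
  have hAmeas : MeasurableSet A := hγmeas measurableSet_Iic
  have hBmeas : MeasurableSet B :=
    (hγmeas measurableSet_Iic).inter (hγmeas measurableSet_Ioi)
  have hunion : {z | γ z ≤ 1} = A ∪ B := by
    ext z
    simp only [hA, hB, Set.mem_setOf_eq, Set.mem_union, Set.mem_inter_iff]
    constructor
    · intro hz
      rcases le_or_gt (γ z) κ with h' | h'
      · exact Or.inl h'
      · exact Or.inr ⟨hz, h'⟩
    · rintro (h' | ⟨h', _⟩)
      · linarith
      · exact h'
  have hdisj : Disjoint A B := by
    rw [Set.disjoint_left]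
    rintro z hz ⟨_, hz2⟩
    have hz' : γ z ≤ κ := hz
    exact absurd hz' (not_le.mpr hz2)
  rw [hunion, lintegral_union hBmeas hdisj]
  have boundA : ∫⁻ z in A, ENNReal.ofReal ‖(k₁ z - h (k₁ z)) - (k₂ z - h (k₂ z))‖ ∂ν
      ≤ ENNReal.ofReal C * ∫⁻ z in A, ENNReal.ofReal (γ z ^ 2) ∂ν := by
    rw [← lintegral_const_mul _ (by fun_prop)]
    refine setLIntegral_mono (by fun_prop) fun z hz => ?_
    have hz1 : γ z ≤ κ := hz
    have h1 : ‖k₁ z‖ ≤ 1 := le_trans (hk₁γ z) (le_trans hz1 hκ1.le)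
    have h2 : ‖k₂ z‖ ≤ 1 := le_trans (hk₂γ z) (le_trans hz1 hκ1.le)
    have b1 := key1 (k₁ z) h1
    have b2 := key1 (k₂ z) h2
    have hn1 : ‖k₁ z‖ ^ 2 ≤ γ z ^ 2 := by nlinarith [norm_nonneg (k₁ z), hk₁γ z, hγpos z]
    have hn2 : ‖k₂ z‖ ^ 2 ≤ γ z ^ 2 := by nlinarith [norm_nonneg (k₂ z), hk₂γ z, hγpos z]
    have hfac : (0:ℝ) ≤ (1 + M) / ε ^ 2 := by positivity
    have hmain : ‖(k₁ z - h (k₁ z)) - (k₂ z - h (k₂ z))‖ ≤ C * γ z ^ 2 := by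
      calc ‖(k₁ z - h (k₁ z)) - (k₂ z - h (k₂ z))‖
          ≤ ‖k₁ z - h (k₁ z)‖ + ‖k₂ z - h (k₂ z)‖ := norm_sub_le _ _
        _ ≤ (1 + M) / ε ^ 2 * ‖k₁ z‖ ^ 2 + (1 + M) / ε ^ 2 * ‖k₂ z‖ ^ 2 := add_le_add b1 b2
        _ ≤ C * γ z ^ 2 := by
            have hC' : C = 2 * ((1 + M) / ε ^ 2) := by rw [hC]; ring
            rw [hC']
            nlinarith [mul_le_mul_of_nonneg_left hn1 hfac, mul_le_mul_of_nonneg_left hn2 hfac]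
    rw [← ENNReal.ofReal_mul hCpos.le]
    exact ENNReal.ofReal_le_ofReal hmain
  have boundB : ∫⁻ z in B, ENNReal.ofReal ‖(k₁ z - h (k₁ z)) - (k₂ z - h (k₂ z))‖ ∂ν
      ≤ ENNReal.ofReal ((1 + Lh) * δ * κ⁻¹)
          * ∫⁻ z, ENNReal.ofReal (min (γ z ^ 2) 1) ∂ν := by
    rw [← lintegral_const_mul _ (by fun_prop)]
    calc ∫⁻ z in B, ENNReal.ofReal ‖(k₁ z - h (k₁ z)) - (k₂ z - h (k₂ z))‖ ∂ν
        ≤ ∫⁻ z in B, ENNReal.ofReal ((1 + Lh) * δ * κ⁻¹) * ENNReal.ofReal (min (γ z ^ 2) 1) ∂ν := by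
          refine setLIntegral_mono (by fun_prop) fun z hz => ?_
          obtain ⟨hz1, hz2⟩ := hz
          have hz1' : γ z ≤ 1 := hz1
          have hz2' : κ < γ z := hz2
          have hmin : min (γ z ^ 2) 1 = γ z ^ 2 := by
            apply min_eq_left; nlinarith [hγpos z]
          have hlip' : ‖h (k₁ z) - h (k₂ z)‖ ≤ Lh * ‖k₁ z - k₂ z‖ := hLip _ _
          have htri : ‖(k₁ z - h (k₁ z)) - (k₂ z - h (k₂ z))‖
              ≤ (1 + Lh) * ‖k₁ z - k₂ z‖ := by
            have : (k₁ z - h (k₁ z)) - (k₂ z - h (k₂ z))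
                = (k₁ z - k₂ z) - (h (k₁ z) - h (k₂ z)) := by abel
            rw [this]
            calc ‖(k₁ z - k₂ z) - (h (k₁ z) - h (k₂ z))‖
                ≤ ‖k₁ z - k₂ z‖ + ‖h (k₁ z) - h (k₂ z)‖ := norm_sub_le _ _
              _ ≤ ‖k₁ z - k₂ z‖ + Lh * ‖k₁ z - k₂ z‖ := by linarith
              _ = (1 + Lh) * ‖k₁ z - k₂ z‖ := by ring
          have hmain : ‖(k₁ z - h (k₁ z)) - (k₂ z - h (k₂ z))‖
              ≤ (1 + Lh) * δ * κ⁻¹ * min (γ z ^ 2) 1 := by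
            rw [hmin]
            have hκinv : (0:ℝ) < κ⁻¹ := by positivity
            have hγκ : γ z ≤ κ⁻¹ * γ z ^ 2 := by
              rw [← sub_nonneg]
              have : κ⁻¹ * γ z ^ 2 - γ z = κ⁻¹ * γ z * (γ z - κ) := by
                field_simp
              rw [this]
              exact mul_nonneg (mul_nonneg hκinv.le (hγpos z)) (by linarith)
            calc ‖(k₁ z - h (k₁ z)) - (k₂ z - h (k₂ z))‖
                ≤ (1 + Lh) * ‖k₁ z - k₂ z‖ := htri
              _ ≤ (1 + Lh) * (γ z * δ) := by
                  apply mul_le_mul_of_nonneg_left (hdiff z); linarith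
              _ ≤ (1 + Lh) * δ * κ⁻¹ * γ z ^ 2 := by
                  nlinarith [mul_le_mul_of_nonneg_left hγκ
                    (mul_nonneg (by linarith : (0:ℝ) ≤ 1 + Lh) hδ)]
          rw [← ENNReal.ofReal_mul (by positivity)]
          exact ENNReal.ofReal_le_ofReal hmain
      _ ≤ ∫⁻ z, ENNReal.ofReal ((1 + Lh) * δ * κ⁻¹) * ENNReal.ofReal (min (γ z ^ 2) 1) ∂ν :=
          setLIntegral_le_lintegral _ _
  exact add_le_add boundA boundB
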